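/- arXiv:1506.07913 — 2 statements merged into one kernel-verified Lean document; each statement's English description precedes it below -/
import Mathlib

section
/- Let G be a compact topological group acting strongly continuously and ergodically by *-automorphisms on a unital C*-algebra A. Then the G-invariant state on A is unique: if φ and ψ are states on A with φ(α_g(a)) = φ(a) and ψ(α_g(a)) = ψ(a) for all g ∈ G and a ∈ A, then φ = ψ. -/
open scoped ComplexOrder

/-!
Average over the normalized Haar measure `μ` of `G`: the conditional expectation
`P a = ∫ α_g a dμ(g)` lands in the fixed-point algebra, which ergodicity makes `ℂ • 1`, so
`P a = c • 1`. A state is bounded, hence commutes with the Bochner integral, so an invariant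
state `φ` satisfies `φ a = φ (P a) = c`, a value independent of `φ`.
-/

open MeasureTheory

theorem exists_isProbabilityMeasure_isMulLeftInvariant (G : Type*) [Group G] [TopologicalSpace G]
    [IsTopologicalGroup G] [CompactSpace G] [MeasurableSpace G] [BorelSpace G] :
    ∃ μ : Measure G, IsProbabilityMeasure μ ∧ μ.IsMulLeftInvariant := by
  have : Nonempty G := ⟨1⟩
  refine ⟨Measure.haarMeasure ⊤, ⟨?_⟩, inferInstance⟩
  rw [← TopologicalSpace.PositiveCompacts.coe_top]
  exact Measure.haarMeasure_self

theorem ContinuousLinearMap.map_integral_of_forall_eq {X 𝕜 E F : Type*} [MeasurableSpace X]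
    (μ : Measure X) [IsProbabilityMeasure μ] [RCLike 𝕜] [NormedAddCommGroup E] [NormedSpace 𝕜 E]
    [NormedSpace ℝ E] [CompleteSpace E] [NormedAddCommGroup F] [NormedSpace 𝕜 F] [NormedSpace ℝ F]
    [CompleteSpace F] (f : E →L[𝕜] F) {u : X → E} (hu : Integrable u μ) {c : F} (hc : ∀ x, f (u x) = c) :
    f (∫ x, u x ∂μ) = c := by
  rw [← f.integral_comp_comm hu, funext hc, integral_const, probReal_univ, one_smul]

theorem apply_integral_orbit_eq {G 𝕜 E : Type*} [Group G] [MeasurableSpace G] [MeasurableMul G]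
    (μ : Measure G) [μ.IsMulLeftInvariant] [RCLike 𝕜] [NormedRing E] [NormedAlgebra 𝕜 E]
    [NormedSpace ℝ E] [CompleteSpace E] (α : G →* (E ≃ₐ[𝕜] E)) (hα : ∀ g, Continuous (α g))
    {x : E} (hx : Integrable (fun g => α g x) μ) (h : G) :
    α h (∫ g, α g x ∂μ) = ∫ g, α g x ∂μ := by
  let L : E →L[𝕜] E := ⟨(α h).toLinearMap, hα h⟩
  calc α h (∫ g, α g x ∂μ) = ∫ g, α h (α g x) ∂μ := (L.integral_comp_comm hx).symm
    _ = ∫ g, α (h * g) x ∂μ := by simp only [map_mul, AlgEquiv.mul_apply]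
    _ = ∫ g, α g x ∂μ := integral_mul_left_eq_self (fun g => α g x) h

section CStarAlgebra

variable {A : Type*} [CStarAlgebra A]

theorem AlgHom.continuous_of_map_star {B : Type*} [CStarAlgebra B] (f : A →ₐ[ℂ] B)
    (hf : ∀ a, f (star a) = star (f a)) : Continuous f :=
  open scoped CStarAlgebra in map_continuous ({ f with map_star' := hf } : A →⋆ₐ[ℂ] B)

theorem LinearMap.continuous_of_nonneg_star_mul_self (φ : A →ₗ[ℂ] ℂ)
    (hφ : ∀ a, 0 ≤ φ (star a * a)) : Continuous φ :=
  letI := CStarAlgebra.spectralOrder A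
  letI := CStarAlgebra.spectralOrderedRing A
  map_continuous <| PositiveLinearMap.mk₀ φ fun a ha => by
    obtain ⟨b, rfl⟩ := CStarAlgebra.nonneg_iff_eq_star_mul_self.mp ha
    exact hφ b

end CStarAlgebra

/-- **Uniqueness of the invariant state for an ergodic action.**
Let `G` be a compact topological group acting strongly continuously and ergodically by
`*`-automorphisms on a unital C*-algebra `A`.  Then the `G`-invariant state on `A` is unique. -/
theorem invariant_state_unique
    (A : Type*) [CStarAlgebra A]
    (G : Type*) [Group G] [TopologicalSpace G] [IsTopologicalGroup G] [CompactSpace G]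
    (α : G →* (A ≃ₐ[ℂ] A))
    (hstar : ∀ g a, α g (star a) = star (α g a))
    (hcont : ∀ a : A, Continuous fun g : G => α g a)
    (herg : ∀ a : A, (∀ g : G, α g a = a) → ∃ c : ℂ, a = c • (1 : A))
    (φ ψ : A →ₗ[ℂ] ℂ)
    (hφstate : φ 1 = 1) (hφpos : ∀ a : A, 0 ≤ φ (star a * a))
    (hψstate : ψ 1 = 1) (hψpos : ∀ a : A, 0 ≤ ψ (star a * a))
    (hφinv : ∀ (g : G) (a : A), φ (α g a) = φ a)
    (hψinv : ∀ (g : G) (a : A), ψ (α g a) = ψ a) :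
    φ = ψ := by
  borelize G
  obtain ⟨μ, _, _⟩ := exists_isProbabilityMeasure_isMulLeftInvariant G
  have hint (a : A) : Integrable (fun g => α g a) μ :=
    (hcont a).integrable_of_hasCompactSupport (.of_compactSpace _)
  have hαcont (g : G) : Continuous (α g) :=
    AlgHom.continuous_of_map_star (α g : A →ₐ[ℂ] A) (hstar g)
  ext a
  obtain ⟨c, hc⟩ := herg _ (apply_integral_orbit_eq μ α hαcont (hint a))
  have eq_of_invariant_state (χ : A →ₗ[ℂ] ℂ) (hone : χ 1 = 1) (hpos : ∀ b, 0 ≤ χ (star b * b))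
      (hinv : ∀ g b, χ (α g b) = χ b) : χ a = c := by
    let X : A →L[ℂ] ℂ := ⟨χ, χ.continuous_of_nonneg_star_mul_self hpos⟩
    rw [← X.map_integral_of_forall_eq μ (hint a) (fun g => hinv g a)]
    simp [X, hc, hone]
  rw [eq_of_invariant_state φ hφstate hφpos hφinv, eq_of_invariant_state ψ hψstate hψpos hψinv]
end

section
/- Let A be a unital C*-algebra and let φ : A → ℂ be a positive tracial linear functional (φ(x* x) is a nonnegative real for all x, and φ(x y) = φ(y x) for all x, y). Let b ∈ A be positive and invertible. Then for every a ∈ A one has Re φ(a* a) ≤ ‖b⁻¹‖ · Re φ(a* a b). (This is the estimate showing that the comparison map L between the GNS space of φ and the GNS space of the conformally deformed functional a ↦ φ(a* a b) is invertible.) -/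
/-!
Since `b⁻¹ ≤ ‖b⁻¹‖`, conjugating by `√b` gives `1 ≤ ‖b⁻¹‖ • b`, and conjugating once more by `a`
gives `a a* ≤ ‖b⁻¹‖ • a b a*`. A functional that is nonnegative on the squares `x* x` is monotone,
and the trace property turns `φ (a a*)` and `φ (a b a*)` into `φ (a* a)` and `φ (a* a b)`.
-/

open scoped ComplexOrder

lemma monotone_of_map_star_mul_self_nonneg {E G F : Type*} [NonUnitalSemiring E] [PartialOrder E]
    [StarRing E] [StarOrderedRing E] [AddCommMonoid G] [PartialOrder G] [IsOrderedAddMonoid G]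
    [FunLike F E G] [AddMonoidHomClass F E G] (f : F) (hf : ∀ x, 0 ≤ f (star x * x)) :
    Monotone f := by
  intro x y hxy
  rw [StarOrderedRing.le_iff] at hxy
  obtain ⟨p, hp, rfl⟩ := hxy
  rw [map_add]
  refine le_add_of_nonneg_right ?_
  induction hp using AddSubmonoid.closure_induction with
  | mem _ h => obtain ⟨s, rfl⟩ := h; exact hf s
  | zero => simp
  | add _ _ _ _ hp hq => rw [map_add]; exact add_nonneg hp hq

open CFC in
lemma one_le_norm_inv_smul_of_nonneg {A : Type*} [CStarAlgebra A] [PartialOrder A]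
    [StarOrderedRing A] {b : Aˣ} (hb : 0 ≤ (b : A)) :
    (1 : A) ≤ ‖(↑b⁻¹ : A)‖ • (b : A) := by
  have hinv : (↑b⁻¹ : A) ≤ algebraMap ℝ A ‖(↑b⁻¹ : A)‖ :=
    IsSelfAdjoint.le_algebraMap_norm_self (.of_nonneg (inv_nonneg_of_nonneg b hb))
  calc (1 : A) = sqrt (b : A) * ↑b⁻¹ * sqrt (b : A) := by
        rw [sqrt_eq_rpow, ← rpow_neg_one_eq_inv b, ← rpow_add b.isUnit, ← rpow_add b.isUnit]
        norm_num [rpow_zero (b : A)]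
    _ ≤ sqrt (b : A) * algebraMap ℝ A ‖(↑b⁻¹ : A)‖ * sqrt (b : A) :=
        conjugate_le_conjugate_of_nonneg hinv (sqrt_nonneg _)
    _ = ‖(↑b⁻¹ : A)‖ • (b : A) := by
        rw [Algebra.algebraMap_eq_smul_one, mul_smul_comm, mul_one, smul_mul_assoc,
          sqrt_mul_sqrt_self (b : A)]

/-- **Invertibility of the GNS comparison map for a conformal deformation.**
Let `φ` be a positive tracial linear functional on a unital C*-algebra `A` and let
`b ∈ A` be positive and invertible.  Then for every `a ∈ A`,
`Re φ(a* a) ≤ ‖b⁻¹‖ · Re φ(a* a b)`. -/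
theorem re_apply_le_mul_pos
    (A : Type*) [CStarAlgebra A] [PartialOrder A] [StarOrderedRing A]
    (φ : A →ₗ[ℂ] ℂ)
    (hpos : ∀ x : A, 0 ≤ φ (star x * x))
    (htrace : ∀ x y : A, φ (x * y) = φ (y * x))
    (b : Aˣ) (hb : 0 ≤ (b : A)) (a : A) :
    (φ (star a * a)).re ≤ ‖((b⁻¹ : Aˣ) : A)‖ * (φ (star a * a * b)).re := by
  set r := ‖((b⁻¹ : Aˣ) : A)‖
  have hconj : a * star a ≤ r • (a * b * star a) := by
    simpa only [mul_one, mul_smul_comm, smul_mul_assoc] using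
      star_right_conjugate_le_conjugate (one_le_norm_inv_smul_of_nonneg hb) a
  calc (φ (star a * a)).re = (φ (a * star a)).re := by rw [htrace]
    _ ≤ (φ (r • (a * b * star a))).re :=
        (Complex.le_def.mp (monotone_of_map_star_mul_self_nonneg φ hpos hconj)).1
    _ = r * (φ (star a * a * b)).re := by
        rw [← Complex.coe_smul, map_smul, htrace, ← mul_assoc, smul_eq_mul, Complex.re_ofReal_mul]
end
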